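/- Let B ≺ D be positive definite d×d matrices with D − B = xxᵀ for some x ∈ ℝ^d. Then xᵀD⁻¹x ≤ ln(det D / det B). -/

import Mathlib

/-!
Writing `B = D - xxᵀ` and `t = xᵀD⁻¹x`, the matrix determinant lemma gives
`det B = det D · (1 - t)`, so positivity of both determinants forces `t < 1` and
`ln (det D / det B) = -ln (1 - t) ≥ t`.
-/

open Matrix

theorem Matrix.det_add_vecMulVec {m α : Type*} [Fintype m] [DecidableEq m] [CommRing α]
    {A : Matrix m m α} (hA : IsUnit A.det) (u v : m → α) :
    (A + vecMulVec u v).det = A.det * (1 + v ⬝ᵥ A⁻¹ *ᵥ u) := by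
  rw [vecMulVec_eq Unit, det_add_replicateCol_mul_replicateRow hA, Matrix.mul_assoc,
    ← replicateCol_mulVec, det_unique (1 + _)]
  rfl

theorem Matrix.det_sub_vecMulVec_self {m α : Type*} [Fintype m] [DecidableEq m] [CommRing α]
    {A : Matrix m m α} (hA : IsUnit A.det) (x : m → α) :
    (A - vecMulVec x x).det = A.det * (1 - x ⬝ᵥ A⁻¹ *ᵥ x) := by
  rw [sub_eq_add_neg, ← neg_vecMulVec, det_add_vecMulVec hA, mulVec_neg, dotProduct_neg,
    sub_eq_add_neg]

theorem Real.le_log_inv_one_sub {t : ℝ} (ht : t < 1) : t ≤ Real.log (1 - t)⁻¹ := by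
  rw [Real.log_inv]
  linarith [Real.log_le_sub_one_of_pos (sub_pos.mpr ht)]

/-- If B and D are positive definite with D − B = xxᵀ, then
xᵀD⁻¹x ≤ ln(det D / det B). -/
theorem stmt_6 (d : ℕ) (B D : Matrix (Fin d) (Fin d) ℝ)
    (hB : B.PosDef) (hD : D.PosDef) (x : Fin d → ℝ)
    (hdiff : D - B = vecMulVec x x) :
    x ⬝ᵥ (D⁻¹ *ᵥ x) ≤ Real.log (D.det / B.det) := by
  have hD_pos : 0 < D.det := hD.det_pos
  have hB_eq : B = D - vecMulVec x x := by rw [← hdiff, sub_sub_cancel]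
  have hdet : B.det = D.det * (1 - x ⬝ᵥ D⁻¹ *ᵥ x) := by
    rw [hB_eq, det_sub_vecMulVec_self hD_pos.ne'.isUnit]
  have ht : x ⬝ᵥ D⁻¹ *ᵥ x < 1 := by
    have := hB.det_pos
    rw [hdet] at this
    linarith [pos_of_mul_pos_right this hD_pos.le]
  rw [hdet, div_mul_cancel_left₀ hD_pos.ne']
  exact Real.le_log_inv_one_sub ht
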